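/- arXiv:2112.03856 — 2 statements merged into one kernel-verified Lean document; each statement's English description precedes it below -/
import Mathlib

section
/- In the toric reflection group W(k,n,m) with n, m coprime, all the generators x₁, ..., xₙ are pairwise conjugate. -/
/-!
Comparing the relations `x_i ⋯ x_{i+m-1} = x_{i+1} ⋯ x_{i+m}` gives
`x_i P = P x_{i+m}` with `P = x_{i+1} ⋯ x_{i+m-1}`, so `x_i` is conjugate to `x_{i+m}`.
The shifts `d` with `x_i ~ x_{i+d}` for all `i` form an additive subgroup of `ZMod n`; it
contains `m`, a unit since `n` and `m` are coprime, so it is everything.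
-/

/-- The word `x_i x_{i+1} ⋯ x_{i+l-1}` (with `l` factors, indices mod `n`) in the free
group on `ZMod n`. -/
def wWord (n l : ℕ) (i : ZMod n) : FreeGroup (ZMod n) :=
  ((List.range l).map fun j => FreeGroup.of (i + (j : ZMod n))).prod

/-- The relations of the toric reflection group `W(k,n,m)`: `xᵢ^k = 1` for all `i`, and all
the `m`-factor products `x_i x_{i+1} ⋯ x_{i+m-1}` (indices mod `n`) are equal. -/
def wRels (k n m : ℕ) : Set (FreeGroup (ZMod n)) :=
  (Set.range fun i : ZMod n => FreeGroup.of i ^ k) ∪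
  (Set.range fun i : ZMod n => wWord n m 1 * (wWord n m i)⁻¹)

/-- The toric reflection group `W(k,n,m)`. -/
abbrev TorGroup (k n m : ℕ) := PresentedGroup (wRels k n m)

/-- The generator `xᵢ` of `W(k,n,m)`, for `i : ZMod n`. -/
def tx (k n m : ℕ) (i : ZMod n) : TorGroup k n m := PresentedGroup.of i

/-- The product `x_i x_{i+1} ⋯ x_{i+l-1}` (with `l` factors, indices mod `n`) in
`W(k,n,m)`. -/
def txProd (k n m : ℕ) (l : ℕ) (i : ZMod n) : TorGroup k n m :=
  ((List.range l).map fun j => tx k n m (i + (j : ZMod n))).prod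

def conjShifts {A G : Type*} [AddGroup A] [Group G] (f : A → G) : AddSubgroup A where
  carrier := {d | ∀ i, IsConj (f i) (f (i + d))}
  zero_mem' i := by simpa using IsConj.refl (f i)
  add_mem' {a b} ha hb i := (ha i).trans (by simpa [add_assoc] using hb (i + a))
  neg_mem' {a} ha i := by simpa using (ha (i + -a)).symm

lemma AddSubgroup.eq_top_of_isUnit_mem {n : ℕ} (S : AddSubgroup (ZMod n)) {u : ZMod n}
    (hu : IsUnit u) (huS : u ∈ S) : S = ⊤ := by
  obtain ⟨c, hc⟩ := hu.exists_left_inv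
  refine (AddSubgroup.eq_top_iff' S).2 fun x => ?_
  obtain ⟨z, hz⟩ := ZMod.intCast_surjective (x * c)
  have hx : x = z • u := by rw [zsmul_eq_mul, hz, mul_assoc, hc, mul_one]
  exact hx ▸ S.zsmul_mem huS z

namespace TorGroup

variable {k n m : ℕ}

lemma mk_wWord (l : ℕ) (i : ZMod n) :
    PresentedGroup.mk (wRels k n m) (wWord n l i) = txProd k n m l i := by
  rw [wWord, map_list_prod, List.map_map]
  rfl

lemma txProd_self_eq (i j : ZMod n) : txProd k n m m i = txProd k n m m j := by
  have hrel (i : ZMod n) : txProd k n m m 1 = txProd k n m m i := by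
    rw [← mk_wWord, ← mk_wWord]
    exact PresentedGroup.mk_eq_mk_of_mul_inv_mem (Or.inr ⟨i, rfl⟩)
  exact (hrel i).symm.trans (hrel j)

lemma txProd_succ (l : ℕ) (i : ZMod n) :
    txProd k n m (l + 1) i = txProd k n m l i * tx k n m (i + l) := by
  simp [txProd, List.range_succ]

lemma txProd_succ' (l : ℕ) (i : ZMod n) :
    txProd k n m (l + 1) i = tx k n m i * txProd k n m l (i + 1) := by
  induction l with
  | zero => simp [txProd]
  | succ l ih =>
    rw [txProd_succ, ih, mul_assoc, Nat.cast_succ, add_comm (l : ZMod n), ← add_assoc,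
      ← txProd_succ]

lemma isConj_tx_add (i : ZMod n) : IsConj (tx k n m i) (tx k n m (i + m)) := by
  obtain _ | l := m
  · simpa using IsConj.refl (tx k n 0 i)
  have hcomm : tx k n (l + 1) i * txProd k n (l + 1) l (i + 1) =
      txProd k n (l + 1) l (i + 1) * tx k n (l + 1) (i + (l + 1 : ℕ)) := by
    have h := txProd_self_eq (k := k) (m := l + 1) i (i + 1)
    rwa [txProd_succ', txProd_succ, add_assoc, add_comm 1, ← Nat.cast_succ] at h
  exact isConj_iff.2 ⟨(txProd k n (l + 1) l (i + 1))⁻¹, by rw [inv_inv, mul_assoc, hcomm,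
    inv_mul_cancel_left]⟩

end TorGroup

theorem stmt9_general (k n m : ℕ)
    (hco : Nat.Coprime n m) :
    ∀ i j : ZMod n, IsConj (tx k n m i) (tx k n m j) := by
  intro i j
  have hunit : IsUnit (m : ZMod n) := (ZMod.isUnit_iff_coprime m n).2 hco.symm
  have htop : conjShifts (tx k n m) = ⊤ :=
    AddSubgroup.eq_top_of_isUnit_mem _ hunit TorGroup.isConj_tx_add
  have hshift : j - i ∈ conjShifts (tx k n m) := htop ▸ AddSubgroup.mem_top _
  simpa using hshift i

/-- In the toric reflection group `W(k,n,m)` with `n, m` coprime, all the generators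
`x₁, …, xₙ` are pairwise conjugate. -/
theorem stmt9 (k n m : ℕ) (hk : 2 ≤ k) (hn : 2 ≤ n) (hm : 2 ≤ m)
    (hco : Nat.Coprime n m) :
    ∀ i j : ZMod n, IsConj (tx k n m i) (tx k n m j) :=
  stmt9_general k n m hco
end

section
/- In the toric reflection group W(k,n,m), the elements (x₁x₂⋯xₙ)^m and (x₁x₂⋯x_m)^n are equal (indices of the xᵢ taken modulo n). -/
lemma mk_wWord (k n m l : ℕ) (i : ZMod n) :
    PresentedGroup.mk (wRels k n m) (wWord n l i) = txProd k n m l i := by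
  rw [wWord, txProd, map_list_prod, List.map_map]
  rfl

lemma txProd_m_eq_txProd_m_one (k n m : ℕ) (i : ZMod n) :
    txProd k n m m i = txProd k n m m 1 := by
  rw [← mk_wWord, ← mk_wWord]
  exact (PresentedGroup.mk_eq_mk_of_mul_inv_mem (Or.inr ⟨i, rfl⟩)).symm

lemma txProd_succ (k n m l : ℕ) (i : ZMod n) :
    txProd k n m (l + 1) i = txProd k n m l i * tx k n m (i + l) := by
  simp [txProd, List.range_succ]

lemma txProd_add (k n m a b : ℕ) (i : ZMod n) :
    txProd k n m (a + b) i = txProd k n m a i * txProd k n m b (i + a) := by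
  induction b with
  | zero => simp [txProd]
  | succ b ih =>
    rw [← Nat.add_assoc, txProd_succ, ih, txProd_succ, mul_assoc, Nat.cast_add, add_assoc]

lemma txProd_mul_eq_pow (k n m l j : ℕ) (i : ZMod n)
    (hper : ∀ r : ℕ, txProd k n m l (i + (l * r : ℕ)) = txProd k n m l i) :
    txProd k n m (l * j) i = txProd k n m l i ^ j := by
  induction j with
  | zero => simp [txProd]
  | succ j ih => rw [Nat.mul_succ, txProd_add, ih, hper, pow_succ]

theorem stmt10_general (k n m : ℕ) :
    txProd k n m n 1 ^ m = txProd k n m m 1 ^ n := by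
  have blocks_n : txProd k n m (n * m) 1 = txProd k n m n 1 ^ m :=
    txProd_mul_eq_pow k n m n m 1 fun r => by simp
  have blocks_m : txProd k n m (m * n) 1 = txProd k n m m 1 ^ n :=
    txProd_mul_eq_pow k n m m n 1 fun r => txProd_m_eq_txProd_m_one k n m _
  rw [← blocks_n, ← blocks_m, Nat.mul_comm]

/-- In the toric reflection group `W(k,n,m)`, the elements `(x₁x₂⋯xₙ)^m` and
`(x₁x₂⋯x_m)^n` are equal (indices mod `n`). -/
theorem stmt10 (k n m : ℕ) (hk : 2 ≤ k) (hn : 2 ≤ n) (hm : 2 ≤ m)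
    (hco : Nat.Coprime n m) :
    txProd k n m n 1 ^ m = txProd k n m m 1 ^ n :=
  stmt10_general k n m
end
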